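/- Let P ⊆ ℝ^n be the set of vectors obtained by sampling, at the points 0, 1/n, …, (n−1)/n, piecewise-polynomial functions p : [0,1] → [0,1] with at most Q singularities and with each polynomial piece of degree at most N, where each piece's coefficients lie in [0,1] and sum to less than 1. For every integer b ≥ 1 there exists a compression code (f, g) on P (describing the at most Q singularity locations, each a point in {1/n, …, (n−1)/n}, and quantizing each of the at most (N+1)(Q+1) polynomial coefficients with a uniform b-bit quantizer) whose rate satisfies r ≤ (N+1)(Q+1) b + Q(log n + 1) and whose distortion satisfies sup_{x ∈ P} ‖x − g(f(x))‖₂ ≤ √n · (N+1) · 2^{−b}. -/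

import Mathlib

open MeasureTheory ProbabilityTheory

/-- The Euclidean (ℓ₂) norm of a vector in ℝ^k. -/
noncomputable def norm2 {k : ℕ} (v : Fin k → ℝ) : ℝ := Real.sqrt (∑ i, v i ^ 2)

/-- The Euclidean inner product on ℝ^k. -/
noncomputable def dot {k : ℕ} (v w : Fin k → ℝ) : ℝ := ∑ i, v i * w i

/-- Matrix-vector multiplication for an m × n real matrix. -/
noncomputable def mulVec' {m n : ℕ} (A : Fin m → Fin n → ℝ) (x : Fin n → ℝ) : Fin m → ℝ :=
  fun i => ∑ j, A i j * x j

/-- The set of vectors in ℝ^n obtained by sampling, at the points 0, 1/n, …, (n-1)/n,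
piecewise-polynomial functions on [0,1] with at most `Q` singularities, each polynomial
piece of degree at most `N`, coefficients in [0,1] summing to less than 1. -/
def PolySet (n N Q : ℕ) : Set (Fin n → ℝ) :=
  {x | ∃ (s : Fin (Q + 2) → ℝ) (a : Fin (Q + 1) → Fin (N + 1) → ℝ),
    s 0 = 0 ∧ s (Fin.last (Q + 1)) = 1 ∧ Monotone s ∧
    (∀ ℓ j, a ℓ j ∈ Set.Icc (0 : ℝ) 1) ∧ (∀ ℓ, ∑ j, a ℓ j < 1) ∧
    ∀ (i : Fin n) (ℓ : Fin (Q + 1)),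
      (i : ℝ) / n ∈ Set.Ico (s ℓ.castSucc) (s ℓ.succ) →
        x i = ∑ j, a ℓ j * ((i : ℝ) / n) ^ (j : ℕ)}

/-!
A signal in `PolySet n N Q` is described by its `Q` interior breakpoints and its `(N+1)(Q+1)`
coefficients. A breakpoint only matters through the number of samples `i/n` lying before it,
which takes `n + 1` values, and each coefficient in `[0, 1)` is rounded down to a multiple of
`2⁻ᵇ`. Since the samples lie in `[0, 1]`, the rounding moves each sample of the signal by at
most `(N + 1) 2⁻ᵇ`, hence the signal by at most `√n (N + 1) 2⁻ᵇ` in `ℓ₂`, while there are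
`(n + 1)^Q 2^{(N+1)(Q+1)b} ≤ 2^{(N+1)(Q+1)b + Q(log n + 1)}` codes.
-/

open Finset

theorem Fin.lt_card_filter_iff {m : ℕ} {p : Fin m → Prop} [DecidablePred p] (hp : Antitone p)
    (k : Fin m) : p k ↔ (k : ℕ) < #{k | p k} := by
  constructor
  · intro hk
    have hsub : Iic k ⊆ ({k | p k} : Finset (Fin m)) := fun k' hk' => by
      simpa using hp (Finset.mem_Iic.mp hk') hk
    simpa using card_le_card hsub
  · intro hk
    by_contra hnk
    have hsub : ({k | p k} : Finset (Fin m)) ⊆ Iio k := fun k' hk' => by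
      simp only [mem_filter, mem_univ, true_and] at hk'
      exact Finset.mem_Iio.mpr (lt_of_not_ge fun hkk' => hnk (hp hkk' hk'))
    have hcard := card_le_card hsub
    simp only [Fin.card_Iio] at hcard
    omega

theorem Fin.card_filter_lt_le_iff {m : ℕ} {α : Type*} [LinearOrder α] {u : Fin m → α}
    (hu : Monotone u) (c : α) (i : Fin m) : #{j | u j < c} ≤ (i : ℕ) ↔ c ≤ u i := by
  rw [← not_lt, ← Fin.lt_card_filter_iff (fun _ _ h hc => (hu h).trans_lt hc), not_lt]

def pieceIndex {Q : ℕ} {α : Type*} [LinearOrder α] (t : Fin Q → α) (x : α) : Fin (Q + 1) :=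
  ⟨#{k | t k ≤ x}, Nat.lt_succ_of_le ((card_filter_le _ _).trans (card_fin Q).le)⟩

theorem pieceIndex_eq_of_iff {Q : ℕ} {α β : Type*} [LinearOrder α] [LinearOrder β]
    {t : Fin Q → α} {t' : Fin Q → β} {x : α} {y : β} (h : ∀ k, t k ≤ x ↔ t' k ≤ y) :
    pieceIndex t x = pieceIndex t' y :=
  Fin.ext (congrArg card (filter_congr (s := univ) fun k _ => h k))

theorem mem_Ico_pieceIndex {Q : ℕ} {α : Type*} [LinearOrder α] {s : Fin (Q + 2) → α}
    (hs : Monotone s) {x : α} (h0 : s 0 ≤ x) (hlast : x < s (Fin.last (Q + 1))) :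
    let L := pieceIndex (fun k : Fin Q => s k.succ.castSucc) x
    x ∈ Set.Ico (s L.castSucc) (s L.succ) := by
  intro L
  have hL : ∀ k : Fin Q, s k.succ.castSucc ≤ x ↔ (k : ℕ) < L := Fin.lt_card_filter_iff
    (fun _ _ hkk hk => (hs (Fin.castSucc_le_castSucc_iff.mpr (Fin.succ_le_succ_iff.mpr hkk))).trans hk)
  constructor
  · rcases Fin.eq_zero_or_eq_succ L with hL0 | ⟨k, hk⟩
    · rwa [hL0]
    · rw [hk, ← Fin.succ_castSucc]
      exact (hL k).mpr (by simp [hk])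
  · rcases Fin.eq_castSucc_or_eq_last L with ⟨k, hk⟩ | hLQ
    · rw [hk, Fin.succ_castSucc]
      exact lt_of_not_ge fun h => by simpa [hk] using (hL k).mp h
    · rwa [hLQ, Fin.succ_last]

noncomputable def sampleCount (n : ℕ) (c : ℝ) : Fin (n + 1) :=
  ⟨#{i : Fin n | (i : ℝ) / n < c}, Nat.lt_succ_of_le ((card_filter_le _ _).trans (card_fin n).le)⟩

theorem sampleCount_le_iff {n : ℕ} (c : ℝ) (i : Fin n) :
    (sampleCount n c : ℕ) ≤ i ↔ c ≤ (i : ℝ) / n :=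
  Fin.card_filter_lt_le_iff (fun _ _ h => by gcongr; exact_mod_cast h) c i

noncomputable def quantize (b : ℕ) (a : ℝ) : ℕ := ⌊a * 2 ^ b⌋₊

theorem quantize_lt {b : ℕ} {a : ℝ} (ha : a < 1) : quantize b a < 2 ^ b := by
  rw [quantize, Nat.floor_lt' (by positivity)]
  push_cast
  exact mul_lt_of_lt_one_left (by positivity) ha

theorem abs_sub_quantize_le {b : ℕ} {a : ℝ} (ha : 0 ≤ a) :
    |a - quantize b a / 2 ^ b| ≤ 1 / 2 ^ b := by
  have h2b : (0 : ℝ) < 2 ^ b := by positivity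
  have hlo : (quantize b a : ℝ) ≤ a * 2 ^ b := Nat.floor_le (by positivity)
  have hhi : a * 2 ^ b < quantize b a + 1 := Nat.lt_floor_add_one _
  rw [show a - quantize b a / 2 ^ b = (a * 2 ^ b - quantize b a) / 2 ^ b by field_simp,
    abs_div, abs_of_pos h2b]
  gcongr
  rw [abs_le]
  constructor <;> linarith

theorem abs_sum_mul_pow_sub_le {m : ℕ} {a c : Fin m → ℝ} {x ε : ℝ} (hx : |x| ≤ 1)
    (h : ∀ j, |a j - c j| ≤ ε) :
    |∑ j, a j * x ^ (j : ℕ) - ∑ j, c j * x ^ (j : ℕ)| ≤ m * ε := by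
  rw [← sum_sub_distrib]
  calc |∑ j, (a j * x ^ (j : ℕ) - c j * x ^ (j : ℕ))|
      = |∑ j, (a j - c j) * x ^ (j : ℕ)| := by simp only [sub_mul]
    _ ≤ ∑ j, |(a j - c j) * x ^ (j : ℕ)| := abs_sum_le_sum_abs _ _
    _ = ∑ j, |a j - c j| * |x| ^ (j : ℕ) := by simp only [abs_mul, abs_pow]
    _ ≤ ∑ _j : Fin m, ε := sum_le_sum fun j _ =>
        (mul_le_mul (h j) (pow_le_one₀ (abs_nonneg x) hx) (by positivity)
          ((abs_nonneg _).trans (h j))).trans_eq (mul_one ε)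
    _ = m * ε := by simp

theorem norm2_le_of_forall_abs_le {k : ℕ} {v : Fin k → ℝ} {ε : ℝ} (hε : 0 ≤ ε)
    (h : ∀ i, |v i| ≤ ε) : norm2 v ≤ Real.sqrt k * ε := by
  calc norm2 v ≤ Real.sqrt (∑ _i : Fin k, ε ^ 2) :=
        Real.sqrt_le_sqrt (sum_le_sum fun i _ => sq_le_sq' (abs_le.mp (h i)).1 (abs_le.mp (h i)).2)
    _ = Real.sqrt k * ε := by
        rw [sum_const, card_univ, Fintype.card_fin, nsmul_eq_mul, Real.sqrt_mul (by positivity),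
          Real.sqrt_sq hε]

theorem exists_nat_code {X C : Type*} [Inhabited X] [Fintype C] (P : Set X) (D : C → X)
    (good : X → X → Prop) (h : ∀ x ∈ P, ∃ c, good x (D c)) :
    ∃ (f : X → ℕ) (g : ℕ → X), ((fun v => g (f v)) '' P).Finite ∧
      ((fun v => g (f v)) '' P).ncard ≤ Fintype.card C ∧ ∀ x ∈ P, good x (g (f x)) := by
  classical
  choose E hE using h
  set ι : C → ℕ := fun c => Fintype.equivFin C c
  have hι : Function.Injective ι := Fin.val_injective.comp (Fintype.equivFin C).injective
  set f : X → ℕ := fun x => if hx : x ∈ P then ι (E x hx) else 0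
  set g := Function.extend ι D default
  have hgf : ∀ x (hx : x ∈ P), g (f x) = D (E x hx) := fun x hx => by
    simp only [f, dif_pos hx, g, hι.extend_apply]
  have himg : (fun v => g (f v)) '' P ⊆ D '' Set.univ := by
    rintro _ ⟨x, hx, rfl⟩
    exact ⟨E x hx, trivial, (hgf x hx).symm⟩
  refine ⟨f, g, (Set.finite_univ.image D).subset himg, ?_, fun x hx => (hgf x hx).symm ▸ hE x hx⟩
  calc _ ≤ (D '' Set.univ).ncard := Set.ncard_le_ncard himg (Set.finite_univ.image D)
    _ ≤ (Set.univ : Set C).ncard := Set.ncard_image_le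
    _ = Fintype.card C := by rw [Set.ncard_univ, Nat.card_eq_fintype_card]

abbrev PiecewiseCode (n N Q b : ℕ) : Type :=
  (Fin Q → Fin (n + 1)) × (Fin (Q + 1) → Fin (N + 1) → Fin (2 ^ b))

noncomputable def PiecewiseCode.decode {n N Q b : ℕ} (c : PiecewiseCode n N Q b) :
    Fin n → ℝ :=
  fun i => ∑ j, ((c.2 (pieceIndex (fun k => (c.1 k : ℕ)) (i : ℕ)) j : ℝ) / 2 ^ b) *
    ((i : ℝ) / n) ^ (j : ℕ)

theorem PiecewiseCode.card (n N Q b : ℕ) :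
    Fintype.card (PiecewiseCode n N Q b) = (n + 1) ^ Q * ((2 ^ b) ^ (N + 1)) ^ (Q + 1) := by
  simp

theorem PiecewiseCode.card_le_rpow {n : ℕ} (hn : 0 < n) (N Q b : ℕ) :
    (Fintype.card (PiecewiseCode n N Q b) : ℝ) ≤
      (2 : ℝ) ^ (((N : ℝ) + 1) * ((Q : ℝ) + 1) * (b : ℝ) + (Q : ℝ) * (Real.logb 2 n + 1)) := by
  have hlog : (2 : ℝ) ^ (Real.logb 2 n + 1) = 2 * n := by
    rw [Real.rpow_add two_pos, Real.rpow_logb two_pos (by norm_num) (by exact_mod_cast hn),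
      Real.rpow_one, mul_comm]
  rw [show ((N : ℝ) + 1) * ((Q : ℝ) + 1) * b + Q * (Real.logb 2 n + 1) =
      ((b * (N + 1) * (Q + 1) : ℕ) : ℝ) + (Real.logb 2 n + 1) * Q by push_cast; ring,
    Real.rpow_add two_pos, Real.rpow_natCast, Real.rpow_mul two_pos.le, hlog, Real.rpow_natCast,
    PiecewiseCode.card]
  push_cast
  calc ((n : ℝ) + 1) ^ Q * ((2 ^ b) ^ (N + 1)) ^ (Q + 1)
      = 2 ^ (b * (N + 1) * (Q + 1)) * ((n : ℝ) + 1) ^ Q := by ring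
    _ ≤ 2 ^ (b * (N + 1) * (Q + 1)) * (2 * n) ^ Q := by
        gcongr
        linarith [(Nat.one_le_cast (α := ℝ)).mpr hn]

theorem PiecewiseCode.exists_decode_approx {n N Q : ℕ} (b : ℕ) {x : Fin n → ℝ}
    (hx : x ∈ PolySet n N Q) :
    ∃ c : PiecewiseCode n N Q b, ∀ i, |x i - c.decode i| ≤ ((N : ℝ) + 1) / 2 ^ b := by
  obtain ⟨s, a, hs0, hs1, hs, ha, hsum, hxa⟩ := hx
  have ha1 : ∀ ℓ j, a ℓ j < 1 := fun ℓ j =>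
    (single_le_sum (fun j' _ => (ha ℓ j').1) (mem_univ j)).trans_lt (hsum ℓ)
  refine ⟨(fun k => sampleCount n (s k.succ.castSucc),
    fun ℓ j => ⟨quantize b (a ℓ j), quantize_lt (ha1 ℓ j)⟩), fun i => ?_⟩
  have hi0 : 0 ≤ (i : ℝ) / n := by positivity
  have hi1 : (i : ℝ) / n < 1 := (div_lt_one (by exact_mod_cast i.pos)).mpr (by exact_mod_cast i.2)
  set L := pieceIndex (fun k : Fin Q => s k.succ.castSucc) ((i : ℝ) / n)
  have hL : pieceIndex (fun k => (sampleCount n (s k.succ.castSucc) : ℕ)) (i : ℕ) = L :=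
    pieceIndex_eq_of_iff fun k => sampleCount_le_iff _ i
  rw [hxa i _ (mem_Ico_pieceIndex hs (hs0 ▸ hi0) (hs1 ▸ hi1)), PiecewiseCode.decode, hL]
  have hpiece := abs_sum_mul_pow_sub_le (a := a L) (abs_le.mpr ⟨by linarith, hi1.le⟩)
    fun j => abs_sub_quantize_le (b := b) (ha _ j).1
  exact hpiece.trans_eq (by push_cast; ring)

theorem piecewise_polynomial_code_exists_general {n N Q : ℕ} (hn : 0 < n) (b : ℕ) :
    ∃ (f : (Fin n → ℝ) → ℕ) (g : ℕ → (Fin n → ℝ)),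
      ((fun v => g (f v)) '' PolySet n N Q).Finite ∧
      ((((fun v => g (f v)) '' PolySet n N Q).ncard : ℝ) ≤
        (2 : ℝ) ^ (((N : ℝ) + 1) * ((Q : ℝ) + 1) * (b : ℝ) +
          (Q : ℝ) * (Real.logb 2 n + 1))) ∧
      ∀ x ∈ PolySet n N Q,
        norm2 (x - g (f x)) ≤ Real.sqrt n * ((N : ℝ) + 1) * (2 : ℝ) ^ (-(b : ℝ)) := by
  obtain ⟨f, g, hfin, hcard, hdist⟩ := exists_nat_code (PolySet n N Q)
    (PiecewiseCode.decode (b := b)) (fun x y => ∀ i, |x i - y i| ≤ ((N : ℝ) + 1) / 2 ^ b)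
    fun x hx => PiecewiseCode.exists_decode_approx b hx
  refine ⟨f, g, hfin, (Nat.cast_le.mpr hcard).trans (PiecewiseCode.card_le_rpow hn N Q b),
    fun x hx => ?_⟩
  calc norm2 (x - g (f x)) ≤ Real.sqrt n * (((N : ℝ) + 1) / 2 ^ b) :=
        norm2_le_of_forall_abs_le (by positivity) (hdist x hx)
    _ = Real.sqrt n * ((N : ℝ) + 1) * (2 : ℝ) ^ (-(b : ℝ)) := by
        rw [Real.rpow_neg two_pos.le, Real.rpow_natCast]
        ring

/-- Existence of a compression code for sampled piecewise-polynomial signals: describing the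
singularity locations and quantizing each polynomial coefficient with b bits yields a codebook
with at most 2^{(N+1)(Q+1)b + Q(log n + 1)} elements and distortion at most √n (N+1) 2^{-b}. -/
theorem piecewise_polynomial_code_exists {n N Q : ℕ} (hn : 0 < n) (b : ℕ) (hb : 1 ≤ b) :
    ∃ (f : (Fin n → ℝ) → ℕ) (g : ℕ → (Fin n → ℝ)),
      ((fun v => g (f v)) '' PolySet n N Q).Finite ∧
      ((((fun v => g (f v)) '' PolySet n N Q).ncard : ℝ) ≤
        (2 : ℝ) ^ (((N : ℝ) + 1) * ((Q : ℝ) + 1) * (b : ℝ) +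
          (Q : ℝ) * (Real.logb 2 n + 1))) ∧
      ∀ x ∈ PolySet n N Q,
        norm2 (x - g (f x)) ≤ Real.sqrt n * ((N : ℝ) + 1) * (2 : ℝ) ^ (-(b : ℝ)) :=
  piecewise_polynomial_code_exists_general hn b
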